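/- Stepped initial film: let θ₀ be a real number and Δ₀ : ℝ → ℝ the step profile Δ₀(Y) = θ₀ for Y ≥ 0 and Δ₀(Y) = 0 for Y < 0. Then the solution Δ(X,T) = ∫_ℝ G(X−Y,T) Δ₀(Y) dY (well defined since G(·,T) is integrable and Δ₀ is bounded) satisfies, for every T > 0 and real X, Δ(X,T) = (θ₀/2) · (1 + (1/π) ∫_ℝ exp(−Q⁴) · sin(Q·X·T^{−1/4})/Q dQ); in particular Δ(X,T) depends on (X,T) only through the self-similar variable U = X·T^{−1/4}, so the stepped-film solution is self-similar at all positive times. -/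

import Mathlib

open MeasureTheory Real

/-- The Green's function of the linearized capillary-driven thin film equation. -/
noncomputable def greenFn (X T : ℝ) : ℝ :=
  (1 / (2 * Real.pi)) * ∫ K : ℝ, Real.exp (-K ^ 4 * T) * Real.cos (K * X)

/-!
Convolving with the step turns `Δ(X, T)` into `θ₀ ∫_{-∞}^X G(z, T) dz`, and `2π G(·, T)` is the
cosine transform of the symbol `k ↦ exp (-k⁴ T)`. The symbol and its first two derivatives are
integrable, so its Fourier transform decays like `ξ⁻²`; hence `G(·, T)` is integrable, Fourier
inversion at `0` gives `∫ G = 1`, and evenness gives `∫_{-∞}^0 G = 1/2`. Fubini turns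
`∫_0^X G` into `(1/2π) ∫ exp (-k⁴ T) X sinc (k X) dk`, and the substitution `k = T^{-1/4} Q`
leaves a function of `X T^{-1/4}` alone.
-/

open FourierTransform Set
open scoped Interval

section FourierDecay

variable {E : Type*} [NormedAddCommGroup E] [NormedSpace ℂ E] {f f' f'' : ℝ → E}

theorem fourier_eq_of_hasDerivAt (hf : ∀ x, HasDerivAt f (f' x) x) (hfi : Integrable f)
    (hf'i : Integrable f') : 𝓕 f' = fun ξ : ℝ => (2 * π * Complex.I * ξ) • 𝓕 f ξ := by
  have hd : deriv f = f' := funext fun x => (hf x).deriv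
  rw [← hd]
  exact Real.fourier_deriv hfi (fun x => (hf x).differentiableAt) (hd ▸ hf'i)

theorem norm_fourier_le_of_hasDerivAt_two (hf : ∀ x, HasDerivAt f (f' x) x)
    (hf' : ∀ x, HasDerivAt f' (f'' x) x) (hfi : Integrable f) (hf'i : Integrable f')
    (hf''i : Integrable f'') (ξ : ℝ) :
    ‖𝓕 f ξ‖ ≤ ((∫ x, ‖f x‖) + ∫ x, ‖f'' x‖) * (1 + (2 * π * ξ) ^ 2)⁻¹ := by
  have h2 : ‖𝓕 f'' ξ‖ = (2 * π * ξ) ^ 2 * ‖𝓕 f ξ‖ := by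
    rw [fourier_eq_of_hasDerivAt hf' hf'i hf''i, fourier_eq_of_hasDerivAt hf hfi hf'i]
    simp only [norm_smul, norm_mul, Complex.norm_real, Complex.norm_ofNat, Complex.norm_I,
      Real.norm_eq_abs]
    rw [← sq_abs (2 * π * ξ), abs_mul, abs_mul, abs_of_pos pi_pos, abs_two]
    ring
  have hf_le : ‖𝓕 f ξ‖ ≤ ∫ x, ‖f x‖ :=
    VectorFourier.norm_fourierIntegral_le_integral_norm _ _ _ _ _
  have hf''_le : ‖𝓕 f'' ξ‖ ≤ ∫ x, ‖f'' x‖ :=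
    VectorFourier.norm_fourierIntegral_le_integral_norm _ _ _ _ _
  rw [le_mul_inv_iff₀ (by positivity)]
  linarith

theorem integrable_fourier_of_hasDerivAt_two (hf : ∀ x, HasDerivAt f (f' x) x)
    (hf' : ∀ x, HasDerivAt f' (f'' x) x) (hfi : Integrable f) (hf'i : Integrable f')
    (hf''i : Integrable f'') : Integrable (𝓕 f) :=
  ((integrable_inv_one_add_sq.comp_mul_left' (by positivity : 2 * π ≠ 0)).const_mul _).mono'
    (VectorFourier.fourierIntegral_continuous Real.continuous_fourierChar continuous_inner
      hfi).aestronglyMeasurable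
    (ae_of_all _ (norm_fourier_le_of_hasDerivAt_two hf hf' hfi hf'i hf''i))

variable [CompleteSpace E] {g : ℝ → E}

theorem integral_fourier_eq_apply_zero (hg : Integrable g) (hFg : Integrable (𝓕 g))
    (h0 : ContinuousAt g 0) : ∫ ξ, 𝓕 g ξ = g 0 := by
  have := hg.fourierInv_fourier_eq hFg h0
  rw [Real.fourierInv_eq'] at this
  simpa using this

end FourierDecay

theorem integral_Iic_zero_of_even {g : ℝ → ℝ} (hg : Integrable g)
    (heven : ∀ x, g (-x) = g x) :
    ∫ x in Iic 0, g x = (∫ x, g x) / 2 := by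
  have hsymm : ∫ x in Iic 0, g x = ∫ x in Ioi 0, g x := by
    calc ∫ x in Iic 0, g x = ∫ x in Iic 0, g (-x) := by simp_rw [heven]
      _ = ∫ x in Ioi 0, g x := by rw [integral_comp_neg_Iic, neg_zero]
  have := intervalIntegral.integral_Iic_add_Ioi (b := 0) hg.integrableOn hg.integrableOn
  linarith

theorem intervalIntegral_cos_mul (k x : ℝ) : ∫ z in 0..x, cos (k * z) = x * sinc (k * x) := by
  rcases eq_or_ne k 0 with rfl | hk
  · simp
  rcases eq_or_ne x 0 with rfl | hx
  · simp
  rw [intervalIntegral.integral_comp_mul_left (fun z => cos z) hk, integral_cos,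
    sinc_of_ne_zero (mul_ne_zero hk hx), mul_zero, sin_zero, sub_zero, smul_eq_mul]
  field_simp

theorem mul_sinc_mul_eq_ite (U Q : ℝ) :
    U * sinc (Q * U) = if Q = 0 then U else sin (Q * U) / Q := by
  rcases eq_or_ne Q 0 with rfl | hQ
  · simp
  rcases eq_or_ne U 0 with rfl | hU
  · simp
  rw [if_neg hQ, sinc_of_ne_zero (mul_ne_zero hQ hU)]
  field_simp

theorem integral_mul_step (g : ℝ → ℝ) (θ X : ℝ) :
    ∫ Y, g (X - Y) * (if 0 ≤ Y then θ else 0) = θ * ∫ z in Iic X, g z := by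
  have hstep (Y : ℝ) :
      g (X - Y) * (if 0 ≤ Y then θ else 0) = θ * (Iic X).indicator g (X - Y) := by
    by_cases hY : 0 ≤ Y
    · rw [if_pos hY, indicator_of_mem (by simpa using hY)]
      ring
    · rw [if_neg hY, indicator_of_notMem (by simpa using hY)]
      ring
  simp_rw [hstep, integral_const_mul, integral_sub_left_eq_self (fun z => (Iic X).indicator g z),
    integral_indicator measurableSet_Iic]

noncomputable def cosTransform (f : ℝ → ℝ) (x : ℝ) : ℝ := ∫ k, f k * cos (k * x)

section CosTransform

variable {f : ℝ → ℝ}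

theorem cosTransform_neg (x : ℝ) : cosTransform f (-x) = cosTransform f x := by
  simp only [cosTransform, mul_neg, cos_neg]

theorem cosTransform_eq_re_fourier (hf : Integrable f) (x : ℝ) :
    cosTransform f x = (𝓕 (fun k => (f k : ℂ)) (x / (2 * π))).re := by
  have hint : Integrable fun k : ℝ =>
      Complex.exp (↑(-2 * π * k * (x / (2 * π))) * Complex.I) * f k := by
    refine hf.ofReal.bdd_mul (c := 1) (by fun_prop) (ae_of_all _ fun k => ?_)
    rw [Complex.norm_exp_ofReal_mul_I]
  have hre : ∀ k : ℝ, (Complex.exp (↑(-2 * π * k * (x / (2 * π))) * Complex.I) * f k).re =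
      f k * cos (k * x) := by
    intro k
    rw [show -2 * π * k * (x / (2 * π)) = -(k * x) by field_simp, Complex.re_mul_ofReal,
      Complex.exp_ofReal_mul_I_re, cos_neg, mul_comm]
  rw [Real.fourier_real_eq_integral_exp_smul, cosTransform]
  simp_rw [smul_eq_mul, ← hre]
  exact integral_re hint

theorem integrable_cosTransform (hf : Integrable f) (hF : Integrable (𝓕 fun k => (f k : ℂ))) :
    Integrable (cosTransform f) := by
  rw [funext (cosTransform_eq_re_fourier hf)]
  exact (hF.comp_div (by positivity)).re

theorem integral_cosTransform (hf : Integrable f) (hF : Integrable (𝓕 fun k => (f k : ℂ)))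
    (h0 : ContinuousAt f 0) : ∫ x, cosTransform f x = 2 * π * f 0 := by
  have h2π : 0 < 2 * π := by positivity
  calc ∫ x, cosTransform f x = (∫ x, 𝓕 (fun k => (f k : ℂ)) (x / (2 * π))).re := by
        rw [funext (cosTransform_eq_re_fourier hf)]
        exact integral_re (hF.comp_div h2π.ne')
    _ = 2 * π * f 0 := by
        rw [Measure.integral_comp_div, integral_fourier_eq_apply_zero hf.ofReal hF
          (Complex.continuous_ofReal.continuousAt.comp h0), abs_of_pos h2π]
        simp

theorem intervalIntegral_cosTransform (hf : Integrable f) (x : ℝ) :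
    ∫ z in 0..x, cosTransform f z = ∫ k, f k * (x * sinc (k * x)) := by
  have hprod : Integrable (Function.uncurry fun z k => f k * cos (k * z))
      ((volume.restrict (Ι 0 x)).prod volume) := by
    have h1 : IntegrableOn (fun _ => (1 : ℝ)) (Ι 0 x) :=
      integrableOn_const measure_Ioc_lt_top.ne
    refine ((h1.mul_prod hf).bdd_mul (c := 1)
      (by fun_prop : Continuous fun p : ℝ × ℝ => cos (p.2 * p.1)).aestronglyMeasurable
      (ae_of_all _ fun p => by simpa using abs_cos_le_one _)).congr (ae_of_all _ fun p => ?_)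
    simp [Function.uncurry, mul_comm]
  simp_rw [intervalIntegral.intervalIntegral_eq_integral_uIoc, cosTransform,
    integral_integral_swap hprod, ← intervalIntegral_cos_mul]
  rw [← integral_smul]
  refine integral_congr_ae (ae_of_all _ fun k => ?_)
  simp only [intervalIntegral.intervalIntegral_eq_integral_uIoc, integral_const_mul, smul_eq_mul]
  ring

theorem integral_Iic_cosTransform (hf : Integrable f) (hF : Integrable (𝓕 fun k => (f k : ℂ)))
    (h0 : ContinuousAt f 0) (x : ℝ) :
    ∫ z in Iic x, cosTransform f z = π * f 0 + ∫ k, f k * (x * sinc (k * x)) := by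
  have hint := integrable_cosTransform hf hF
  have hneg : ∫ z in Iic 0, cosTransform f z = π * f 0 := by
    rw [integral_Iic_zero_of_even hint cosTransform_neg, integral_cosTransform hf hF h0]
    ring
  rw [← intervalIntegral_cosTransform hf, ← hneg,
    ← intervalIntegral.integral_Iic_sub_Iic hint.integrableOn hint.integrableOn]
  ring

end CosTransform

section QuarticExponential

variable {T : ℝ}

theorem exp_neg_pow_four_mul_le (hT : 0 < T) (K : ℝ) :
    exp (-K ^ 4 * T) ≤ exp T * exp (-T * K ^ 2) := by
  rw [← exp_add]
  exact exp_le_exp.2 (by nlinarith [sq_nonneg (K ^ 2 - 1), sq_nonneg K])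

theorem integrable_pow_mul_exp_neg_pow_four (hT : 0 < T) (n : ℕ) :
    Integrable fun K : ℝ => K ^ n * exp (-K ^ 4 * T) := by
  have hgauss : Integrable fun K : ℝ => K ^ n * exp (-T * K ^ 2) := by
    simpa using integrable_rpow_mul_exp_neg_mul_sq hT (s := n)
      (by linarith [n.cast_nonneg (α := ℝ)])
  refine (hgauss.norm.const_mul (exp T)).mono' (by fun_prop) (ae_of_all _ fun K => ?_)
  simp only [norm_mul, norm_pow, Real.norm_eq_abs, abs_exp]
  calc |K| ^ n * exp (-K ^ 4 * T) ≤ |K| ^ n * (exp T * exp (-T * K ^ 2)) := by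
        gcongr; exact exp_neg_pow_four_mul_le hT K
    _ = exp T * (|K| ^ n * exp (-T * K ^ 2)) := by ring

theorem integrable_fourier_exp_neg_pow_four (hT : 0 < T) :
    Integrable (𝓕 fun K : ℝ => (↑(exp (-K ^ 4 * T)) : ℂ)) := by
  have hf (K : ℝ) : HasDerivAt (fun K => exp (-K ^ 4 * T))
      (-4 * T * K ^ 3 * exp (-K ^ 4 * T)) K := by
    have hexponent : HasDerivAt (fun K : ℝ => -K ^ 4 * T) (-(4 * K ^ 3) * T) K :=
      ((hasDerivAt_pow 4 K).neg.mul_const T).congr_deriv (by norm_num)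
    exact hexponent.exp.congr_deriv (by ring)
  have hf' (K : ℝ) : HasDerivAt (fun K => -4 * T * K ^ 3 * exp (-K ^ 4 * T))
      ((16 * T ^ 2 * K ^ 6 - 12 * T * K ^ 2) * exp (-K ^ 4 * T)) K := by
    exact (((hasDerivAt_pow 3 K).const_mul (-4 * T)).mul (hf K)).congr_deriv (by ring)
  have hint := integrable_pow_mul_exp_neg_pow_four hT
  have hfi : Integrable fun K => exp (-K ^ 4 * T) := by simpa using hint 0
  have hf'i : Integrable fun K => -4 * T * K ^ 3 * exp (-K ^ 4 * T) :=
    ((hint 3).const_mul (-4 * T)).congr (ae_of_all _ fun K => by dsimp only; ring)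
  have hf''i : Integrable fun K => (16 * T ^ 2 * K ^ 6 - 12 * T * K ^ 2) * exp (-K ^ 4 * T) :=
    (((hint 6).const_mul (16 * T ^ 2)).sub ((hint 2).const_mul (12 * T))).congr
      (ae_of_all _ fun K => by simp only [Pi.sub_apply]; ring)
  exact integrable_fourier_of_hasDerivAt_two (fun K => (hf K).ofReal_comp)
    (fun K => (hf' K).ofReal_comp) hfi.ofReal hf'i.ofReal hf''i.ofReal


theorem rpow_neg_one_div_four_pow_four_mul (hT : 0 < T) :
    (T ^ (-(1 / 4 : ℝ))) ^ 4 * T = 1 := by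
  rw [← rpow_natCast, ← rpow_mul hT.le, ← rpow_add_one hT.ne']
  norm_num

theorem integral_exp_neg_pow_four_mul_sinc (hT : 0 < T) (X : ℝ) :
    ∫ K, exp (-K ^ 4 * T) * (X * sinc (K * X)) =
      ∫ Q, exp (-Q ^ 4) * (X * T ^ (-(1 / 4 : ℝ)) * sinc (Q * (X * T ^ (-(1 / 4 : ℝ))))) := by
  set c := T ^ (-(1 / 4 : ℝ))
  have hc : 0 < c := rpow_pos_of_pos hT _
  have hsubst := Measure.integral_comp_mul_left (fun K => exp (-K ^ 4 * T) * (X * sinc (K * X))) c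
  rw [abs_of_pos (inv_pos.2 hc), smul_eq_mul, eq_inv_mul_iff_mul_eq₀ hc.ne'] at hsubst
  rw [← hsubst, ← integral_const_mul]
  congr 1 with Q
  rw [mul_pow, show -(c ^ 4 * Q ^ 4) * T = -Q ^ 4 * (c ^ 4 * T) by ring,
    rpow_neg_one_div_four_pow_four_mul hT]
  ring_nf

theorem integral_Iic_greenFn (hT : 0 < T) (X : ℝ) :
    ∫ z in Iic X, greenFn z T = 1 / 2 + 1 / (2 * π) *
      ∫ Q, exp (-Q ^ 4) * (X * T ^ (-(1 / 4 : ℝ)) * sinc (Q * (X * T ^ (-(1 / 4 : ℝ))))) := by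
  have hf : Integrable fun K : ℝ => exp (-K ^ 4 * T) := by
    simpa using integrable_pow_mul_exp_neg_pow_four hT 0
  have h0 : ContinuousAt (fun K : ℝ => exp (-K ^ 4 * T)) 0 := by fun_prop
  have hG : (fun z => greenFn z T) =
      fun z => 1 / (2 * π) * cosTransform (fun K => exp (-K ^ 4 * T)) z := rfl
  rw [hG, integral_const_mul,
    integral_Iic_cosTransform hf (integrable_fourier_exp_neg_pow_four hT) h0,
    integral_exp_neg_pow_four_mul_sinc hT, mul_add]
  congr 1
  field_simp
  simp

end QuarticExponential

/-- Stepped initial film: for the step profile `Δ₀ = θ₀·𝟙_{[0,∞)}`, the solution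
`Δ(X,T) = ∫ Y, G(X−Y,T) Δ₀(Y) dY` satisfies, for every `T > 0` and real `X`,
`Δ(X,T) = (θ₀/2)(1 + (1/π) ∫ Q, e^{−Q⁴} sin(Q X T^{−1/4})/Q dQ)` (where `sin(QU)/Q` takes
the value `U` at `Q = 0`); in particular `Δ` depends on `(X,T)` only through the
self-similar variable `U = X T^{−1/4}`, so the stepped-film solution is self-similar at
all positive times. -/
theorem stepped_film_self_similar (θ₀ : ℝ) (Δ₀ : ℝ → ℝ)
    (hΔ₀ : ∀ Y : ℝ, Δ₀ Y = if 0 ≤ Y then θ₀ else 0)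
    (Δ : ℝ → ℝ → ℝ) (hΔ : ∀ X T : ℝ, Δ X T = ∫ Y : ℝ, greenFn (X - Y) T * Δ₀ Y) :
    (∀ (T : ℝ), 0 < T → ∀ X : ℝ,
      Δ X T = (θ₀ / 2) * (1 + (1 / Real.pi) * ∫ Q : ℝ, Real.exp (-Q ^ 4) *
        (if Q = 0 then X * T ^ (-(1 / 4 : ℝ))
          else Real.sin (Q * (X * T ^ (-(1 / 4 : ℝ)))) / Q))) ∧
    (∀ X₁ T₁ X₂ T₂ : ℝ, 0 < T₁ → 0 < T₂ →
      X₁ * T₁ ^ (-(1 / 4 : ℝ)) = X₂ * T₂ ^ (-(1 / 4 : ℝ)) → Δ X₁ T₁ = Δ X₂ T₂) := by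
  have hformula (T : ℝ) (hT : 0 < T) (X : ℝ) : Δ X T = θ₀ / 2 * (1 + 1 / π *
      ∫ Q, exp (-Q ^ 4) * (X * T ^ (-(1 / 4 : ℝ)) * sinc (Q * (X * T ^ (-(1 / 4 : ℝ)))))) := by
    rw [hΔ]
    simp_rw [hΔ₀]
    rw [integral_mul_step (fun z => greenFn z T), integral_Iic_greenFn hT]
    ring
  refine ⟨fun T hT X => ?_, fun X₁ T₁ X₂ T₂ hT₁ hT₂ hU => ?_⟩
  · simp_rw [hformula T hT X, mul_sinc_mul_eq_ite]
  · rw [hformula T₁ hT₁ X₁, hformula T₂ hT₂ X₂, hU]
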